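/- Suppose for each Bell state Ψ ∈ {φ⁺,φ⁻,ψ⁺,ψ⁻} and each outcome λ in a finite index set Λ_Ψ we have product Kraus operators K_A^{λ,Ψ} ⊗ K_B^{λ,Ψ} on ℂ²⊗ℂ², such that the families {K_A^{λ,Ψ}}, {K_B^{λ,Ψ}} over all (Ψ,λ) each satisfy the completeness relation Σ K† K = I. Then the winning probability p_win = (1/4) Σ_Ψ Σ_{λ∈Λ_Ψ} |⟨Ψ| K_A^{λ,Ψ} ⊗ K_B^{λ,Ψ} |Ψ⟩|² is at most 1/4. -/

import Mathlib

/-!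
Every Bell state is `(1 ⊗ σ)|φ⁺⟩` for a unitary `σ ∈ {1, Z, X, XZ}`, and
`⟨φ⁺|A ⊗ B|φ⁺⟩ = ½ ∑ⱼₖ Aⱼₖ Bⱼₖ`. By Cauchy–Schwarz and unitary invariance of the
Frobenius norm, each term of `p_win` is therefore at most `¼ ‖K_A‖² ‖K_B‖²`.
Completeness makes `∑ ‖K_A‖² = ∑ ‖K_B‖² = tr 1 = 2`, and for nonnegative weights
`∑ aₓ bₓ ≤ (∑ aₓ)(∑ bₓ) = 4`, so `p_win ≤ ¼ · ¼ · 4`.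
-/

open Kronecker Matrix

/-- Bell state `|φ⁺⟩ = (|00⟩ + |11⟩)/√2`. -/
noncomputable def phiP : Fin 2 × Fin 2 → ℂ := fun p =>
  if p.1 = p.2 then (Real.sqrt 2 : ℂ)⁻¹ else 0

/-- Bell state `|φ⁻⟩ = (|00⟩ - |11⟩)/√2`. -/
noncomputable def phiM : Fin 2 × Fin 2 → ℂ := fun p =>
  if p = (0, 0) then (Real.sqrt 2 : ℂ)⁻¹ else if p = (1, 1) then -(Real.sqrt 2 : ℂ)⁻¹ else 0

/-- Bell state `|ψ⁺⟩ = (|01⟩ + |10⟩)/√2`. -/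
noncomputable def psiP : Fin 2 × Fin 2 → ℂ := fun p =>
  if p.1 ≠ p.2 then (Real.sqrt 2 : ℂ)⁻¹ else 0

/-- Bell state `|ψ⁻⟩ = (|01⟩ - |10⟩)/√2`. -/
noncomputable def psiM : Fin 2 × Fin 2 → ℂ := fun p =>
  if p = (0, 1) then (Real.sqrt 2 : ℂ)⁻¹ else if p = (1, 0) then -(Real.sqrt 2 : ℂ)⁻¹ else 0

/-- The four Bell states, indexed by `Fin 4`. -/
noncomputable def bell : Fin 4 → (Fin 2 × Fin 2 → ℂ) := ![phiP, phiM, psiP, psiM]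

section FrobeniusNormSq

variable {m n : Type*} [Fintype m] [Fintype n]

noncomputable def frobeniusNormSq (A : Matrix m n ℂ) : ℝ :=
  ∑ i, ∑ j, ‖A i j‖ ^ 2

lemma frobeniusNormSq_nonneg (A : Matrix m n ℂ) : 0 ≤ frobeniusNormSq A := by
  unfold frobeniusNormSq
  positivity

lemma trace_conjTranspose_mul_self_eq_frobeniusNormSq (A : Matrix m n ℂ) :
    (Aᴴ * A).trace = frobeniusNormSq A := by
  simp only [trace, diag, mul_apply, conjTranspose_apply, frobeniusNormSq]
  push_cast
  rw [Finset.sum_comm]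
  exact Finset.sum_congr rfl fun i _ => Finset.sum_congr rfl fun j _ => Complex.conj_mul' _

lemma frobeniusNormSq_conjTranspose_mul_mul_self [DecidableEq n] {U : Matrix n n ℂ}
    (hU : U ∈ unitaryGroup n ℂ) (B : Matrix n n ℂ) : frobeniusNormSq (Uᴴ * B * U) = frobeniusNormSq B := by
  have hUU : U * Uᴴ = 1 := mem_unitaryGroup_iff.mp hU
  apply Complex.ofReal_injective
  rw [← trace_conjTranspose_mul_self_eq_frobeniusNormSq,
    ← trace_conjTranspose_mul_self_eq_frobeniusNormSq]
  calc ((Uᴴ * B * U)ᴴ * (Uᴴ * B * U)).trace = (Uᴴ * (Bᴴ * B) * U).trace := by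
        simp only [conjTranspose_mul, conjTranspose_conjTranspose, Matrix.mul_assoc]
        rw [← Matrix.mul_assoc U, hUU, Matrix.one_mul]
    _ = (Bᴴ * B * (U * Uᴴ)).trace := by rw [trace_mul_comm, ← Matrix.mul_assoc, trace_mul_comm]
    _ = (Bᴴ * B).trace := by rw [hUU, Matrix.mul_one]

lemma sum_frobeniusNormSq_eq_card [DecidableEq n] {ι : Type*} [Fintype ι] {K : ι → Matrix n n ℂ}
    (hK : ∑ x, (K x)ᴴ * K x = 1) : ∑ x, frobeniusNormSq (K x) = Fintype.card n := by
  apply Complex.ofReal_injective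
  push_cast
  simp_rw [← trace_conjTranspose_mul_self_eq_frobeniusNormSq, ← trace_sum, hK, trace_one]

lemma sq_norm_sum_mul_le {ι : Type*} (s : Finset ι) (a b : ι → ℂ) :
    ‖∑ i ∈ s, a i * b i‖ ^ 2 ≤ (∑ i ∈ s, ‖a i‖ ^ 2) * ∑ i ∈ s, ‖b i‖ ^ 2 :=
  calc ‖∑ i ∈ s, a i * b i‖ ^ 2 ≤ (∑ i ∈ s, ‖a i‖ * ‖b i‖) ^ 2 := by
        gcongr
        exact (norm_sum_le _ _).trans_eq (by simp only [norm_mul])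
    _ ≤ _ := Finset.sum_mul_sq_le_sq_mul_sq _ _ _

lemma sq_norm_sum_entrywise_mul_le (A C : Matrix m n ℂ) :
    ‖∑ i, ∑ j, A i j * C i j‖ ^ 2 ≤ frobeniusNormSq A * frobeniusNormSq C := by
  simpa only [frobeniusNormSq, Fintype.sum_prod_type] using
    sq_norm_sum_mul_le Finset.univ (fun p : m × n => A p.1 p.2) (fun p => C p.1 p.2)

end FrobeniusNormSq

lemma sum_mul_le_sum_mul_sum {ι R : Type*} [CommSemiring R] [PartialOrder R] [IsOrderedRing R]
    (s : Finset ι) {f g : ι → R} (hf : ∀ i ∈ s, 0 ≤ f i) (hg : ∀ i ∈ s, 0 ≤ g i) :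
    ∑ i ∈ s, f i * g i ≤ (∑ i ∈ s, f i) * ∑ i ∈ s, g i := by
  rw [Finset.mul_sum]
  exact Finset.sum_le_sum fun i hi =>
    mul_le_mul_of_nonneg_right (Finset.single_le_sum hf hi) (hg i hi)

lemma star_one_kronecker_mulVec_dotProduct {l n : Type*} [Fintype l] [Fintype n] [DecidableEq l]
    (A : Matrix l l ℂ) (B U : Matrix n n ℂ) (v : l × n → ℂ) :
    star ((1 ⊗ₖ U) *ᵥ v) ⬝ᵥ (A ⊗ₖ B) *ᵥ ((1 ⊗ₖ U) *ᵥ v) =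
      star v ⬝ᵥ (A ⊗ₖ (Uᴴ * B * U)) *ᵥ v := by
  rw [star_mulVec, ← dotProduct_mulVec, mulVec_mulVec, mulVec_mulVec, conjTranspose_kronecker,
    conjTranspose_one, ← mul_kronecker_mul, ← mul_kronecker_mul, Matrix.one_mul, Matrix.mul_one]

lemma star_phiP_dotProduct_kronecker_mulVec (A B : Matrix (Fin 2) (Fin 2) ℂ) :
    star phiP ⬝ᵥ (A ⊗ₖ B) *ᵥ phiP = 2⁻¹ * ∑ i, ∑ j, A i j * B i j := by
  have h : ((Real.sqrt 2 : ℂ))⁻¹ * ((Real.sqrt 2 : ℂ))⁻¹ = 2⁻¹ := by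
    rw [← mul_inv, ← Complex.ofReal_mul, Real.mul_self_sqrt zero_le_two, Complex.ofReal_ofNat]
  simp only [dotProduct, Pi.star_apply, phiP, RCLike.star_def, mulVec, kroneckerMap_apply, mul_ite,
    mul_zero, Fintype.sum_prod_type, Finset.sum_ite_eq, Finset.mem_univ, ↓reduceIte,
    Fin.sum_univ_two, map_inv₀, Complex.conj_ofReal, zero_ne_one, map_zero, zero_mul, add_zero,
    one_ne_zero, zero_add, ← h]
  ring

noncomputable def bellUnitary : Fin 4 → Matrix (Fin 2) (Fin 2) ℂ :=
  ![1, !![1, 0; 0, -1], !![0, 1; 1, 0], !![0, -1; 1, 0]]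

lemma bellUnitary_mem_unitaryGroup (i : Fin 4) : bellUnitary i ∈ unitaryGroup (Fin 2) ℂ := by
  rw [mem_unitaryGroup_iff]
  fin_cases i <;> ext j k <;> fin_cases j <;> fin_cases k <;>
    simp [bellUnitary, mul_apply, Fin.sum_univ_two]

lemma bell_eq_one_kronecker_bellUnitary_mulVec (i : Fin 4) :
    bell i = (1 ⊗ₖ bellUnitary i) *ᵥ phiP := by
  ext ⟨j, k⟩
  fin_cases i <;> fin_cases j <;> fin_cases k <;>
    simp [bell, bellUnitary, phiP, phiM, psiP, psiM, mulVec, dotProduct, Fintype.sum_prod_type,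
      Fin.sum_univ_two, kroneckerMap_apply]

lemma normSq_star_bell_dotProduct_kronecker_mulVec_le (A B : Matrix (Fin 2) (Fin 2) ℂ)
    (i : Fin 4) :
    Complex.normSq (star (bell i) ⬝ᵥ (A ⊗ₖ B) *ᵥ bell i) ≤
      1 / 4 * (frobeniusNormSq A * frobeniusNormSq B) := by
  have hCS := sq_norm_sum_entrywise_mul_le A ((bellUnitary i)ᴴ * B * bellUnitary i)
  rw [frobeniusNormSq_conjTranspose_mul_mul_self (bellUnitary_mem_unitaryGroup i)] at hCS
  rw [bell_eq_one_kronecker_bellUnitary_mulVec, star_one_kronecker_mulVec_dotProduct,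
    star_phiP_dotProduct_kronecker_mulVec, Complex.normSq_eq_norm_sq, norm_mul, mul_pow, norm_inv,
    Complex.norm_ofNat]
  linarith

/-- Theorem 1: nondestructive discrimination of all four Bell states between two
distant parties using local (product) Kraus operations succeeds with probability
at most `1/4`.  For each Bell state `Ψ` (indexed by `Fin 4`) and each outcome
`λ` in a finite set `Λ Ψ`, the parties apply `K_A^{λ,Ψ} ⊗ K_B^{λ,Ψ}`; both local
families satisfy the completeness relation `Σ K† K = I`. -/
theorem nondestructive_bell_discrimination_LOCC_bound
    (Λ : Fin 4 → Type) [∀ i, Fintype (Λ i)]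
    (KA KB : ∀ i : Fin 4, Λ i → Matrix (Fin 2) (Fin 2) ℂ)
    (hA : (∑ i : Fin 4, ∑ l : Λ i, (KA i l)ᴴ * KA i l) = 1)
    (hB : (∑ i : Fin 4, ∑ l : Λ i, (KB i l)ᴴ * KB i l) = 1) :
    (1 / 4 : ℝ) * ∑ i : Fin 4, ∑ l : Λ i,
        Complex.normSq (star (bell i) ⬝ᵥ ((KA i l) ⊗ₖ (KB i l)).mulVec (bell i)) ≤
      1 / 4 := by
  have hsum : ∀ K : ∀ i, Λ i → Matrix (Fin 2) (Fin 2) ℂ, ∑ i, ∑ l, (K i l)ᴴ * K i l = 1 →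
      ∑ x : Σ i, Λ i, frobeniusNormSq (K x.1 x.2) = 2 := fun K hK => by
    simpa using sum_frobeniusNormSq_eq_card (K := fun x : Σ i, Λ i => K x.1 x.2)
      (by rwa [Fintype.sum_sigma])
  rw [← Fintype.sum_sigma']
  calc (1 / 4 : ℝ) * ∑ x : Σ i, Λ i,
        Complex.normSq (star (bell x.1) ⬝ᵥ (KA x.1 x.2 ⊗ₖ KB x.1 x.2) *ᵥ bell x.1)
      ≤ 1 / 4 * ∑ x : Σ i, Λ i,
        1 / 4 * (frobeniusNormSq (KA x.1 x.2) * frobeniusNormSq (KB x.1 x.2)) := by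
        gcongr with x
        exact normSq_star_bell_dotProduct_kronecker_mulVec_le _ _ _
    _ ≤ 1 / 4 * (1 / 4 * ((∑ x : Σ i, Λ i, frobeniusNormSq (KA x.1 x.2)) *
        ∑ x : Σ i, Λ i, frobeniusNormSq (KB x.1 x.2))) := by
        rw [← Finset.mul_sum]
        gcongr
        exact sum_mul_le_sum_mul_sum _ (fun _ _ => frobeniusNormSq_nonneg _)
          (fun _ _ => frobeniusNormSq_nonneg _)
    _ = 1 / 4 := by
        rw [hsum KA hA, hsum KB hB]
        norm_num
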